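/- Let k ≥ 2 and n ≥ 1 be integers. Then g(n,k,1;0) ≥ n + ⌊(k−1)/2⌋ · log₂(2n/(k−1)), where the inequality is between real numbers and log₂ denotes the base-2 logarithm. -/

import Mathlib

open scoped Classical

noncomputable section

abbrev F2 : Type := ZMod 2

/-- Number of members of the multiset `H` (counted with multiplicity) containing `x`. -/
def covCount (n : ℕ) (H : Multiset (AffineSubspace F2 (Fin n → F2))) (x : Fin n → F2) : ℕ :=
  Multiset.countP (fun S => x ∈ S) H

/-- `H` is a (k,d)-cover of 𝔽₂ⁿ: a multiset of (n-d)-dimensional affine subspaces covering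
every nonzero point at least `k` times and the origin at most `k-1` times. -/
def IsCover (n k d : ℕ) (H : Multiset (AffineSubspace F2 (Fin n → F2))) : Prop :=
  (∀ S ∈ H, (S : Set (Fin n → F2)).Nonempty ∧ Module.finrank F2 S.direction = n - d) ∧
  (∀ x : Fin n → F2, x ≠ 0 → k ≤ covCount n H x) ∧
  covCount n H 0 < k

/-- `H` is a (k,d;s)-cover of 𝔽₂ⁿ: a (k,d)-cover in which the origin lies in exactly `s`
members (counted with multiplicity). -/
def IsCoverExact (n k d s : ℕ) (H : Multiset (AffineSubspace F2 (Fin n → F2))) : Prop :=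
  (∀ S ∈ H, (S : Set (Fin n → F2)).Nonempty ∧ Module.finrank F2 S.direction = n - d) ∧
  (∀ x : Fin n → F2, x ≠ 0 → k ≤ covCount n H x) ∧
  covCount n H 0 = s

/-- Minimum cardinality of a (k,d)-cover of 𝔽₂ⁿ. -/
def f (n k d : ℕ) : ℕ := sInf {m | ∃ H, IsCover n k d H ∧ Multiset.card H = m}

/-- Minimum cardinality of a (k,d;s)-cover of 𝔽₂ⁿ. -/
def g (n k d s : ℕ) : ℕ := sInf {m | ∃ H, IsCoverExact n k d s H ∧ Multiset.card H = m}

end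

/-! A hyperplane of 𝔽₂ⁿ missing the origin is the level set `{x | a x = 1}` of a linear
functional `a`, so a (k,1;0)-cover by `m` hyperplanes is a linear map `Φ : 𝔽₂ⁿ → 𝔽₂ᵐ` whose
value `Φ x` has Hamming weight equal to the number of hyperplanes through `x`. Thus `Φ` is a
linear code of dimension `n` and minimum distance at least `k`, and the Hamming bound with
radius `t = ⌊(k-1)/2⌋` gives `2ⁿ · C(m, t) ≤ 2ᵐ`. Since `C(m, t) ≥ (m/t)ᵗ ≥ (2n/(k-1))ᵗ`,
taking `log₂` yields the bound. -/

open Finset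

section HammingBound

variable {α ι β : Type*} [Fintype ι] [DecidableEq β]

theorem hammingDist_self_add [AddGroup β] (x e : ι → β) :
    hammingDist x (x + e) = hammingNorm e := by
  rw [hammingDist_eq_hammingNorm, neg_add_cancel_left]

theorem card_mul_card_hammingBall_le [DecidableEq ι] [Fintype α] [AddGroup β] [Fintype β]
    {t : ℕ} (Φ : α → ι → β) (hΦ : ∀ x y, x ≠ y → 2 * t < hammingDist (Φ x) (Φ y)) :
    Fintype.card α * #{e : ι → β | hammingNorm e ≤ t} ≤ Fintype.card β ^ Fintype.card ι := by
  calc Fintype.card α * #{e : ι → β | hammingNorm e ≤ t}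
      = #((univ : Finset α) ×ˢ ({e : ι → β | hammingNorm e ≤ t} : Finset _)) := by
        rw [card_product, card_univ]
    _ ≤ #(univ : Finset (ι → β)) := by
        refine card_le_card_of_injOn (fun p => Φ p.1 + p.2) (fun _ _ => mem_univ _) ?_
        rintro ⟨x, e⟩ he ⟨y, e'⟩ he' hxy
        simp only [coe_product, coe_univ, coe_filter, Set.mem_prod, Set.mem_univ,
          Set.mem_ofPred_eq, true_and] at he he' hxy
        obtain rfl : x = y := by
          by_contra hne
          have hfar := hΦ x y hne
          have htri := hammingDist_triangle (Φ x) (Φ x + e) (Φ y)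
          rw [hammingDist_self_add, hxy, hammingDist_comm (Φ y + e'),
            hammingDist_self_add] at htri
          omega
        rw [add_left_cancel hxy]
    _ = Fintype.card β ^ Fintype.card ι := by simp

theorem choose_card_le_card_hammingBall [DecidableEq ι] [Zero β] [Nontrivial β] [Fintype β]
    (t : ℕ) :
    (Fintype.card ι).choose t ≤ #{e : ι → β | hammingNorm e ≤ t} := by
  obtain ⟨b, hb⟩ := exists_ne (0 : β)
  rw [← card_univ, ← card_powersetCard]
  refine card_le_card_of_injOn (fun T i => if i ∈ T then b else 0) (fun T hT => ?_) ?_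
  · have hnorm : hammingNorm (fun i => if i ∈ T then b else 0) = #T := by
      simp [hammingNorm, hb]
    simp_all [mem_powersetCard]
  · intro T _ T' _ h
    ext i
    have := congrFun h i
    by_cases hi : i ∈ T <;> by_cases hi' : i ∈ T' <;> simp_all

end HammingBound

theorem Nat.div_pow_le_choose {α : Type*} [Field α] [LinearOrder α] [IsStrictOrderedRing α]
    {m t : ℕ} (h : t ≤ m) : ((m : α) / t) ^ t ≤ m.choose t := by
  rcases t.eq_zero_or_pos with rfl | ht
  · simp
  have htα : (0 : α) < t := by exact_mod_cast ht
  have key : ((m : α) / t) ^ t * t.factorial ≤ m.descFactorial t := by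
    have hcard : ((m : α) / t) ^ t = ((m : α) / t) ^ #(range t) := by rw [card_range]
    rw [← Nat.descFactorial_self, Nat.descFactorial_eq_prod_range, Nat.descFactorial_eq_prod_range,
      Nat.cast_prod, Nat.cast_prod, mul_comm, hcard, prod_mul_pow_card]
    refine prod_le_prod (fun i _ => by positivity) fun i hi => ?_
    have hi := mem_range.mp hi
    have him : (i : α) * t ≤ i * m := by gcongr
    rw [Nat.cast_sub hi.le, Nat.cast_sub (hi.le.trans h), mul_div_assoc', div_le_iff₀ htα]
    nlinarith
  rw [Nat.descFactorial_eq_factorial_mul_choose, Nat.cast_mul, mul_comm] at key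
  exact le_of_mul_le_mul_left key (by positivity)

theorem add_mul_logb_le_of_two_pow_mul_choose_le {n m t : ℕ} {r : ℝ} (hr : 0 < r)
    (hrt : r * t ≤ n) (htm : t ≤ m) (h : 2 ^ n * m.choose t ≤ 2 ^ m) :
    n + t * Real.logb 2 r ≤ m := by
  have hnm : n ≤ m := (Nat.pow_le_pow_iff_right (by norm_num)).mp
    ((Nat.le_mul_of_pos_right _ (Nat.choose_pos htm)).trans h)
  have hpow : r ^ t ≤ m.choose t := by
    rcases t.eq_zero_or_pos with rfl | ht
    · simp
    calc r ^ t ≤ ((m : ℝ) / t) ^ t := by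
          gcongr
          rw [le_div_iff₀ (by exact_mod_cast ht)]
          exact hrt.trans (by exact_mod_cast hnm)
      _ ≤ m.choose t := Nat.div_pow_le_choose htm
  have hle : (2 : ℝ) ^ n * r ^ t ≤ 2 ^ m :=
    calc (2 : ℝ) ^ n * r ^ t ≤ 2 ^ n * m.choose t := by gcongr
      _ ≤ 2 ^ m := by exact_mod_cast h
  have := Real.logb_le_logb_of_le (b := 2) (by norm_num) (by positivity) hle
  simpa only [Real.logb_mul (by positivity : (2 : ℝ) ^ n ≠ 0) (by positivity : r ^ t ≠ 0),
    Real.logb_pow, Real.logb_self_eq_one one_lt_two, mul_one] using this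

section Hyperplane

variable {K V : Type*} [Field K] [AddCommGroup V] [Module K V] [FiniteDimensional K V]

theorem AffineSubspace.exists_linearMap_mem_iff_eq_one {S : AffineSubspace K V}
    (hS : (S : Set V).Nonempty) (hdim : Module.finrank K S.direction + 1 = Module.finrank K V)
    (h0 : (0 : V) ∉ S) : ∃ f : V →ₗ[K] K, ∀ x, x ∈ S ↔ f x = 1 := by
  obtain ⟨p, hp⟩ := hS
  have hquot : Module.finrank K (V ⧸ S.direction) = Module.finrank K K := by
    have := S.direction.finrank_quotient_add_finrank
    rw [Module.finrank_self]
    omega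
  let φ : V →ₗ[K] K := (LinearEquiv.ofFinrankEq _ _ hquot).toLinearMap ∘ₗ S.direction.mkQ
  have hφ : ∀ v, v ∈ S.direction ↔ φ v = 0 := fun v => by
    rw [← LinearMap.mem_ker, LinearMap.ker_comp, LinearEquiv.ker, Submodule.comap_bot,
      Submodule.ker_mkQ]
  have hφp : φ p ≠ 0 := by
    rw [Ne, ← hφ]
    intro hpD
    apply h0
    rw [← AffineSubspace.vsub_right_mem_direction_iff_mem hp, vsub_eq_sub, zero_sub]
    exact S.direction.neg_mem hpD
  refine ⟨(φ p)⁻¹ • φ, fun x => ?_⟩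
  rw [← AffineSubspace.vsub_right_mem_direction_iff_mem hp, hφ, vsub_eq_sub, map_sub,
    sub_eq_zero, LinearMap.smul_apply, smul_eq_mul, inv_mul_eq_one₀ hφp, eq_comm]

theorem LinearMap.exists_affineSubspace_mem_iff_eq_one (f : V →ₗ[K] K) {p : V} (hp : f p = 1) :
    ∃ S : AffineSubspace K V, (S : Set V).Nonempty ∧
      Module.finrank K S.direction + 1 = Module.finrank K V ∧ ∀ x, x ∈ S ↔ f x = 1 := by
  refine ⟨AffineSubspace.mk' p (LinearMap.ker f), ⟨p, AffineSubspace.self_mem_mk' _ _⟩, ?_,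
    fun x => ?_⟩
  · have hsurj : LinearMap.range f = ⊤ :=
      LinearMap.range_eq_top.mpr fun c => ⟨c • p, by simp [hp]⟩
    rw [AffineSubspace.direction_mk', ← f.finrank_range_add_finrank_ker, hsurj, finrank_top,
      Module.finrank_self, add_comm]
  · rw [AffineSubspace.mem_mk', LinearMap.mem_ker, vsub_eq_sub, map_sub, hp, sub_eq_zero]

end Hyperplane

theorem ZMod.ne_zero_iff_eq_one (b : ZMod 2) : b ≠ 0 ↔ b = 1 := by
  decide +revert

theorem covCount_nsmul {n : ℕ} (k : ℕ) (H : Multiset (AffineSubspace F2 (Fin n → F2)))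
    (x : Fin n → F2) : covCount n (k • H) x = k * covCount n H x :=
  Multiset.countP_nsmul _ _ _

theorem exists_isCoverExact (n k : ℕ) : ∃ H, IsCoverExact n k 1 0 H := by
  choose S hS using fun i : Fin n =>
    (LinearMap.proj i : (Fin n → F2) →ₗ[F2] F2).exists_affineSubspace_mem_iff_eq_one
      (p := Pi.single i 1) (by simp)
  refine ⟨k • univ.val.map S, ?_, fun x hx => ?_, ?_⟩
  · intro T hT
    obtain ⟨i, -, rfl⟩ := Multiset.mem_map.mp (Multiset.mem_of_mem_nsmul hT)
    refine ⟨(hS i).1, ?_⟩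
    have hdim := (hS i).2.1
    rw [Module.finrank_fin_fun] at hdim
    omega
  · obtain ⟨i, hi⟩ := Function.ne_iff.mp hx
    have hcount : 0 < covCount n (univ.val.map S) x :=
      Multiset.countP_pos.mpr ⟨S i, Multiset.mem_map_of_mem _ (mem_univ i),
        ((hS i).2.2 x).mpr ((ZMod.ne_zero_iff_eq_one _).mp hi)⟩
    rw [covCount_nsmul]
    exact Nat.le_mul_of_pos_right k hcount
  · rw [covCount_nsmul, covCount, Multiset.countP_eq_zero.mpr, mul_zero]
    rintro _ hT
    obtain ⟨i, -, rfl⟩ := Multiset.mem_map.mp hT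
    simp [(hS i).2.2]

theorem exists_isCoverExact_card_eq_g (n k : ℕ) :
    ∃ H, IsCoverExact n k 1 0 H ∧ Multiset.card H = g n k 1 0 :=
  let ⟨H, hH⟩ := exists_isCoverExact n k
  Nat.sInf_mem (s := {m | ∃ H, IsCoverExact n k 1 0 H ∧ Multiset.card H = m}) ⟨_, H, hH, rfl⟩

namespace IsCoverExact

variable {n k : ℕ} {H : Multiset (AffineSubspace F2 (Fin n → F2))}

theorem le_card (hn : 1 ≤ n) (hH : IsCoverExact n k 1 0 H) : k ≤ Multiset.card H :=
  (hH.2.1 (fun _ => 1) (Function.ne_iff.mpr ⟨⟨0, hn⟩, one_ne_zero⟩)).trans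
    (Multiset.countP_le_card _ _)

theorem exists_linearMap_hammingNorm_eq (hn : 1 ≤ n) (hH : IsCoverExact n k 1 0 H) :
    ∃ Φ : (Fin n → F2) →ₗ[F2] (H → F2), ∀ x, hammingNorm (Φ x) = covCount n H x := by
  have hfun : ∀ S ∈ H, ∃ f : (Fin n → F2) →ₗ[F2] F2, ∀ x, x ∈ S ↔ f x = 1 := fun S hS =>
    AffineSubspace.exists_linearMap_mem_iff_eq_one (hH.1 S hS).1
      (by rw [(hH.1 S hS).2, Module.finrank_fin_fun]; omega)
      (Multiset.countP_eq_zero.mp hH.2.2 S hS)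
  choose a ha using hfun
  refine ⟨LinearMap.pi fun S : H => a S Multiset.coe_mem, fun x => ?_⟩
  rw [covCount]
  conv_rhs => rw [← Multiset.map_univ_coe H, Multiset.countP_map]
  rw [hammingNorm]
  simp only [LinearMap.pi_apply, ZMod.ne_zero_iff_eq_one, ← ha]
  rfl

theorem two_pow_mul_choose_le (hn : 1 ≤ n) (hH : IsCoverExact n k 1 0 H) {t : ℕ}
    (ht : 2 * t < k) : 2 ^ n * (Multiset.card H).choose t ≤ 2 ^ Multiset.card H := by
  obtain ⟨Φ, hΦ⟩ := hH.exists_linearMap_hammingNorm_eq hn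
  have hdist : ∀ x y, x ≠ y → 2 * t < hammingDist (Φ x) (Φ y) := fun x y hxy => by
    rw [hammingDist_eq_hammingNorm, ← map_neg, ← map_add, hΦ]
    exact ht.trans_le (hH.2.1 _ (neg_add_eq_zero.not.mpr hxy))
  have hball := card_mul_card_hammingBall_le Φ hdist
  have hchoose := choose_card_le_card_hammingBall (ι := H) (β := F2) t
  simp only [Fintype.card_fun, ZMod.card, Fintype.card_fin, Multiset.card_coe] at hball hchoose
  exact (Nat.mul_le_mul_left _ hchoose).trans hball

end IsCoverExact

theorem stmt10 (n k : ℕ) (hk : 2 ≤ k) (hn : 1 ≤ n) :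
    (n : ℝ) + (((k - 1) / 2 : ℕ) : ℝ) * Real.logb 2 (2 * (n : ℝ) / ((k : ℝ) - 1))
      ≤ (g n k 1 0 : ℝ) := by
  obtain ⟨H, hH, hcard⟩ := exists_isCoverExact_card_eq_g n k
  set t := (k - 1) / 2
  have ht : 2 * t + 1 ≤ k := by omega
  have hk1 : (0 : ℝ) < (k : ℝ) - 1 := by
    have : (2 : ℝ) ≤ k := by exact_mod_cast hk
    linarith
  have hrt : 2 * (n : ℝ) / ((k : ℝ) - 1) * t ≤ n := by
    have : (2 : ℝ) * t + 1 ≤ k := by exact_mod_cast ht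
    rw [div_mul_eq_mul_div, div_le_iff₀ hk1]
    nlinarith [(by exact_mod_cast hn : (1 : ℝ) ≤ n)]
  rw [← hcard]
  exact add_mul_logb_le_of_two_pow_mul_choose_le (by positivity) hrt
    (by have := hH.le_card hn; omega) (hH.two_pow_mul_choose_le hn ht)
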